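/- arXiv:2203.16178 — 3 statements merged into one kernel-verified Lean document; each statement's English description precedes it below -/
import Mathlib

section
/- Let F be a nonconstant polynomial with Hill interval I = [x₀, x₁] whose endpoints are regular points of F (F'(x₀) ≠ 0 and F'(x₁) ≠ 0), and suppose that Δθᵢ(F,I) := (2/i!)∫_{x₀}^{x₁} xⁱ F(x)/√(1 - F(x)²) dx = 0 for all i = 0, 1, …, k where k ≥ deg F. Then F = 0, contradicting F being nonconstant; hence no nonconstant polynomial F with a regular Hill interval satisfies all these vanishing conditions. -/
open Polynomial Set MeasureTheory

private lemma hill_integrable (F : Polynomial ℝ) (x₀ x₁ : ℝ) (hlt : x₀ < x₁)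
    (hHill : ∀ x ∈ Ioo x₀ x₁, (F.eval x) ^ 2 < 1)
    (h0 : (F.eval x₀) ^ 2 = 1) (h1 : (F.eval x₁) ^ 2 = 1)
    (hr0 : (Polynomial.derivative F).eval x₀ ≠ 0)
    (hr1 : (Polynomial.derivative F).eval x₁ ≠ 0)
    (φ : ℝ → ℝ) (hφ : Continuous φ) :
    IntegrableOn (fun x => φ x / Real.sqrt (1 - (F.eval x) ^ 2)) (Ioo x₀ x₁) := by
  set G : Polynomial ℝ := 1 - F ^ 2 with hGdef
  have hGev : ∀ x : ℝ, G.eval x = 1 - (F.eval x) ^ 2 := by intro x; simp [hGdef]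
  have hroot0 : G.IsRoot x₀ := by
    simp only [Polynomial.IsRoot, hGev, h0, sub_self]
  obtain ⟨Q₀, hQ₀⟩ : (X - C x₀) ∣ G := Polynomial.dvd_iff_isRoot.2 hroot0
  have hroot1 : Q₀.IsRoot x₁ := by
    have hG1 : G.eval x₁ = 0 := by rw [hGev, h1]; ring
    rw [hQ₀] at hG1
    simp only [Polynomial.eval_mul, Polynomial.eval_sub, Polynomial.eval_X,
      Polynomial.eval_C] at hG1
    rcases mul_eq_zero.1 hG1 with h | h
    · exact absurd h (by intro h'; linarith [sub_eq_zero.1 h'])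
    · exact h
  obtain ⟨Q, hQ⟩ : (X - C x₁) ∣ Q₀ := Polynomial.dvd_iff_isRoot.2 hroot1
  have hGQ : G = (X - C x₀) * ((X - C x₁) * Q) := by rw [hQ₀, hQ]
  set P : ℝ → ℝ := fun x => -(Q.eval x) with hPdef
  have hPcont : Continuous P := (Polynomial.continuous Q).neg
  have hfac : ∀ x : ℝ, 1 - (F.eval x) ^ 2 = (x - x₀) * (x₁ - x) * P x := by
    intro x
    have h := congrArg (Polynomial.eval x) hGQ
    simp only [hGev, Polynomial.eval_mul, Polynomial.eval_sub, Polynomial.eval_X,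
      Polynomial.eval_C] at h
    rw [h]; simp [hPdef]; ring
  -- positivity of P on the open interval
  have hPIoo : ∀ x ∈ Ioo x₀ x₁, 0 < P x := by
    intro x hx
    have h1' : 0 < (x - x₀) * (x₁ - x) * P x := by
      rw [← hfac x]; linarith [hHill x hx]
    have h2' : 0 < (x - x₀) * (x₁ - x) := mul_pos (by linarith [hx.1]) (by linarith [hx.2])
    by_contra h
    push_neg at h
    nlinarith
  -- derivative computations
  have hd0 : (Polynomial.derivative G).eval x₀ = (x₀ - x₁) * Q.eval x₀ := by
    rw [hGQ]
    simp only [Polynomial.derivative_mul, Polynomial.derivative_sub,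
      Polynomial.derivative_X, Polynomial.derivative_C, Polynomial.eval_add,
      Polynomial.eval_mul, Polynomial.eval_sub, Polynomial.eval_X, Polynomial.eval_C,
      Polynomial.eval_one, sub_zero, sub_self]
    ring
  have hd1 : (Polynomial.derivative G).eval x₁ = (x₁ - x₀) * Q.eval x₁ := by
    rw [hGQ]
    simp only [Polynomial.derivative_mul, Polynomial.derivative_sub,
      Polynomial.derivative_X, Polynomial.derivative_C, Polynomial.eval_add,
      Polynomial.eval_mul, Polynomial.eval_sub, Polynomial.eval_X, Polynomial.eval_C,
      Polynomial.eval_one, sub_zero, sub_self]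
    ring
  have hdF : ∀ x : ℝ, (Polynomial.derivative G).eval x
      = -(2 * F.eval x * (Polynomial.derivative F).eval x) := by
    intro x
    simp only [hGdef, Polynomial.derivative_sub, Polynomial.derivative_one,
      Polynomial.derivative_pow, Polynomial.eval_sub, Polynomial.eval_mul,
      Polynomial.eval_zero, Polynomial.eval_C, Polynomial.eval_pow, zero_sub,
      Polynomial.eval_neg]
    ring
  have hF0ne : F.eval x₀ ≠ 0 := by intro h; rw [h] at h0; norm_num at h0
  have hF1ne : F.eval x₁ ≠ 0 := by intro h; rw [h] at h1; norm_num at h1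
  have hP0ne : P x₀ ≠ 0 := by
    simp only [hPdef, neg_ne_zero]
    intro h
    have h2 := hd0
    rw [hdF x₀, h, mul_zero] at h2
    have h3 : (2:ℝ) * Polynomial.eval x₀ F * Polynomial.eval x₀ (Polynomial.derivative F) = 0 := by
      linarith
    exact (mul_ne_zero (mul_ne_zero two_ne_zero hF0ne) hr0) h3
  have hP1ne : P x₁ ≠ 0 := by
    simp only [hPdef, neg_ne_zero]
    intro h
    have h2 := hd1
    rw [hdF x₁, h, mul_zero] at h2
    have h3 : (2:ℝ) * Polynomial.eval x₁ F * Polynomial.eval x₁ (Polynomial.derivative F) = 0 := by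
      linarith
    exact (mul_ne_zero (mul_ne_zero two_ne_zero hF1ne) hr1) h3
  -- positivity of P at the endpoints, by continuity
  have hP0 : 0 < P x₀ := by
    haveI : (nhdsWithin x₀ (Ioo x₀ x₁)).NeBot := by
      refine mem_closure_iff_nhdsWithin_neBot.1 ?_
      rw [closure_Ioo hlt.ne]
      exact ⟨le_refl _, hlt.le⟩
    have hten : Filter.Tendsto P (nhdsWithin x₀ (Ioo x₀ x₁)) (nhds (P x₀)) :=
      (hPcont.continuousAt).continuousWithinAt
    have h0le : 0 ≤ P x₀ := ge_of_tendsto hten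
      (Filter.eventually_of_mem self_mem_nhdsWithin fun x hx => (hPIoo x hx).le)
    exact lt_of_le_of_ne h0le (Ne.symm hP0ne)
  have hP1 : 0 < P x₁ := by
    haveI : (nhdsWithin x₁ (Ioo x₀ x₁)).NeBot := by
      refine mem_closure_iff_nhdsWithin_neBot.1 ?_
      rw [closure_Ioo hlt.ne]
      exact ⟨hlt.le, le_refl _⟩
    have hten : Filter.Tendsto P (nhdsWithin x₁ (Ioo x₀ x₁)) (nhds (P x₁)) :=
      (hPcont.continuousAt).continuousWithinAt
    have h0le : 0 ≤ P x₁ := ge_of_tendsto hten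
      (Filter.eventually_of_mem self_mem_nhdsWithin fun x hx => (hPIoo x hx).le)
    exact lt_of_le_of_ne h0le (Ne.symm hP1ne)
  have hPIcc : ∀ x ∈ Icc x₀ x₁, 0 < P x := by
    intro x hx
    rcases eq_or_lt_of_le hx.1 with h | h
    · rw [← h]; exact hP0
    rcases eq_or_lt_of_le hx.2 with h' | h'
    · rw [h']; exact hP1
    exact hPIoo x ⟨h, h'⟩
  -- min of P on Icc
  obtain ⟨c, hc, hcm⟩ := isCompact_Icc.exists_isMinOn (nonempty_Icc.2 hlt.le)
    (hPcont.continuousOn (s := Icc x₀ x₁))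
  set m : ℝ := P c with hmdef
  have hm : 0 < m := hPIcc c hc
  have hmle : ∀ x ∈ Icc x₀ x₁, m ≤ P x := fun x hx => hcm hx
  -- bound for φ on Icc
  obtain ⟨Cb, hCb⟩ := isCompact_Icc.exists_bound_of_continuousOn
    (hφ.continuousOn (s := Icc x₀ x₁))
  have hCb0 : 0 ≤ Cb := le_trans (norm_nonneg _) (hCb x₀ ⟨le_refl _, hlt.le⟩)
  set d : ℝ := (x₁ - x₀) / 2 with hddef
  have hd : 0 < d := by simp [hddef]; linarith
  set μ : ℝ := x₀ + d with hμdef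
  have hμ0 : x₀ < μ := by simp [hμdef]; linarith
  have hμ1 : μ < x₁ := by simp [hμdef, hddef]; linarith
  set f : ℝ → ℝ := fun x => φ x / Real.sqrt (1 - (F.eval x) ^ 2) with hfdef
  have hfm : AEStronglyMeasurable f (volume.restrict (Ioc x₀ μ)) ∧
      AEStronglyMeasurable f (volume.restrict (Ioo μ x₁)) := by
    have : Measurable f := by
      apply Measurable.div hφ.measurable
      exact (Real.continuous_sqrt.comp (continuous_const.sub ((Polynomial.continuous F).pow 2))).measurable
    exact ⟨this.aestronglyMeasurable, this.aestronglyMeasurable⟩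
  -- general bound on Ioo x₀ x₁
  have hbound : ∀ x ∈ Ioo x₀ x₁,
      ‖f x‖ ≤ Cb / Real.sqrt ((x - x₀) * (x₁ - x) * m) := by
    intro x hx
    have hxIcc : x ∈ Icc x₀ x₁ := ⟨hx.1.le, hx.2.le⟩
    have hpos : 0 < (x - x₀) * (x₁ - x) * m :=
      mul_pos (mul_pos (by linarith [hx.1]) (by linarith [hx.2])) hm
    have hle : (x - x₀) * (x₁ - x) * m ≤ 1 - (F.eval x) ^ 2 := by
      rw [hfac x]
      have := hmle x hxIcc
      nlinarith [hx.1, hx.2]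
    have hsle : Real.sqrt ((x - x₀) * (x₁ - x) * m)
        ≤ Real.sqrt (1 - (F.eval x) ^ 2) := Real.sqrt_le_sqrt hle
    have hspos : 0 < Real.sqrt ((x - x₀) * (x₁ - x) * m) := Real.sqrt_pos.2 hpos
    have : ‖f x‖ = |φ x| / Real.sqrt (1 - (F.eval x) ^ 2) := by
      rw [hfdef]
      simp only [Real.norm_eq_abs, abs_div, abs_of_nonneg (Real.sqrt_nonneg _)]
    rw [this]
    exact div_le_div₀ hCb0 (by simpa using hCb x hxIcc) hspos hsle
  -- integrability on the left half
  have hleft : IntegrableOn f (Ioc x₀ μ) := by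
    have hint : IntervalIntegrable (fun x : ℝ => x ^ (-(1/2) : ℝ)) volume 0 d :=
      intervalIntegral.intervalIntegrable_rpow' (by norm_num)
    have hint2 := hint.comp_sub_right x₀
    rw [zero_add, add_comm d x₀] at hint2
    have hg1 : IntegrableOn (fun x : ℝ => (Cb / Real.sqrt (m * d)) * (x - x₀) ^ (-(1/2) : ℝ))
        (Ioc x₀ μ) := by
      exact (((intervalIntegrable_iff_integrableOn_Ioc_of_le hμ0.le).1 hint2).const_mul _)
    refine hg1.integrable.mono hfm.1 ?_
    rw [ae_restrict_iff' measurableSet_Ioc]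
    refine Filter.Eventually.of_forall fun x hx => ?_
    have hxIoo : x ∈ Ioo x₀ x₁ := ⟨hx.1, lt_of_le_of_lt hx.2 hμ1⟩
    refine le_trans (hbound x hxIoo) (le_trans ?_ (le_abs_self _))
    -- Cb / √((x-x₀)(x₁-x)m) ≤ (Cb/√(m d)) * (x-x₀)^(-1/2)
    have hx0 : (0:ℝ) < x - x₀ := by linarith [hx.1]
    have hxd : d ≤ x₁ - x := by
      have : x ≤ μ := hx.2
      simp only [hμdef, hddef] at this ⊢
      linarith
    have h1' : m * d * (x - x₀) ≤ (x - x₀) * (x₁ - x) * m := by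
      have hh := mul_le_mul_of_nonneg_left hxd (le_of_lt (mul_pos hm hx0))
      nlinarith [hh]
    have hs1 : Real.sqrt (m * d * (x - x₀)) ≤ Real.sqrt ((x - x₀) * (x₁ - x) * m) :=
      Real.sqrt_le_sqrt h1'
    have hs1pos : 0 < Real.sqrt (m * d * (x - x₀)) :=
      Real.sqrt_pos.2 (by positivity)
    have heq : (Cb / Real.sqrt (m * d)) * (x - x₀) ^ (-(1/2) : ℝ)
        = Cb / Real.sqrt (m * d * (x - x₀)) := by
      rw [Real.sqrt_mul (by positivity : (0:ℝ) ≤ m * d) (x - x₀)]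
      rw [Real.rpow_neg hx0.le, ← Real.sqrt_eq_rpow]
      rw [← div_eq_mul_inv, div_div]
    rw [heq]
    exact div_le_div₀ hCb0 (le_refl _) hs1pos hs1
  -- integrability on the right half
  have hright : IntegrableOn f (Ioo μ x₁) := by
    have hint : IntervalIntegrable (fun x : ℝ => x ^ (-(1/2) : ℝ)) volume 0 d :=
      intervalIntegral.intervalIntegrable_rpow' (by norm_num)
    have hint2 := (hint.comp_sub_left x₁).symm
    rw [sub_zero] at hint2
    have hx₁d : x₁ - d = μ := by simp [hμdef, hddef]; ring
    rw [hx₁d] at hint2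
    have hg1 : IntegrableOn (fun x : ℝ => (Cb / Real.sqrt (m * d)) * (x₁ - x) ^ (-(1/2) : ℝ))
        (Ioo μ x₁) := by
      refine IntegrableOn.mono_set ?_ Ioo_subset_Ioc_self
      exact (((intervalIntegrable_iff_integrableOn_Ioc_of_le hμ1.le).1 hint2).const_mul _)
    refine hg1.integrable.mono hfm.2 ?_
    rw [ae_restrict_iff' measurableSet_Ioo]
    refine Filter.Eventually.of_forall fun x hx => ?_
    have hxIoo : x ∈ Ioo x₀ x₁ := ⟨lt_trans hμ0 hx.1, hx.2⟩
    refine le_trans (hbound x hxIoo) (le_trans ?_ (le_abs_self _))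
    have hx1 : (0:ℝ) < x₁ - x := by linarith [hx.2]
    have hxd : d ≤ x - x₀ := by
      have : μ ≤ x := hx.1.le
      simp only [hμdef] at this
      linarith
    have h1' : m * d * (x₁ - x) ≤ (x - x₀) * (x₁ - x) * m := by
      have hh := mul_le_mul_of_nonneg_left hxd (le_of_lt (mul_pos hm hx1))
      nlinarith [hh]
    have hs1 : Real.sqrt (m * d * (x₁ - x)) ≤ Real.sqrt ((x - x₀) * (x₁ - x) * m) :=
      Real.sqrt_le_sqrt h1'
    have hs1pos : 0 < Real.sqrt (m * d * (x₁ - x)) :=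
      Real.sqrt_pos.2 (by positivity)
    have heq : (Cb / Real.sqrt (m * d)) * (x₁ - x) ^ (-(1/2) : ℝ)
        = Cb / Real.sqrt (m * d * (x₁ - x)) := by
      rw [Real.sqrt_mul (by positivity : (0:ℝ) ≤ m * d) (x₁ - x)]
      rw [Real.rpow_neg hx1.le, ← Real.sqrt_eq_rpow]
      rw [← div_eq_mul_inv, div_div]
    rw [heq]
    exact div_le_div₀ hCb0 (le_refl _) hs1pos hs1
  have hsub : Ioo x₀ x₁ ⊆ Ioc x₀ μ ∪ Ioo μ x₁ := by
    intro x hx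
    by_cases h : x ≤ μ
    · exact Or.inl ⟨hx.1, h⟩
    · exact Or.inr ⟨lt_of_not_ge h, hx.2⟩
  exact (hleft.union hright).mono_set hsub

theorem no_vanishing_periods (k : ℕ) (F : Polynomial ℝ) (x₀ x₁ : ℝ) (hlt : x₀ < x₁)
    (hnc : 0 < F.natDegree) (hdeg : F.natDegree ≤ k)
    (hHill : ∀ x ∈ Ioo x₀ x₁, (F.eval x) ^ 2 < 1)
    (h0 : (F.eval x₀) ^ 2 = 1) (h1 : (F.eval x₁) ^ 2 = 1)
    (hr0 : (Polynomial.derivative F).eval x₀ ≠ 0)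
    (hr1 : (Polynomial.derivative F).eval x₁ ≠ 0) :
    ¬ (∀ i : ℕ, i ≤ k →
      (2 / (Nat.factorial i : ℝ)) *
        ∫ x in Ioo x₀ x₁, x ^ i * F.eval x / Real.sqrt (1 - (F.eval x) ^ 2) = 0) := by
  intro H
  have hF : F ≠ 0 := by intro h; rw [h] at hnc; simp at hnc
  have key := hill_integrable F x₀ x₁ hlt hHill h0 h1 hr0 hr1
  have hIi : ∀ i : ℕ, i ≤ k →
      ∫ x in Ioo x₀ x₁, x ^ i * F.eval x / Real.sqrt (1 - (F.eval x) ^ 2) = 0 := by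
    intro i hi
    have h := H i hi
    have hne : (2 / (Nat.factorial i : ℝ)) ≠ 0 := by positivity
    exact (mul_eq_zero.1 h).resolve_left hne
  have hint : ∀ i : ℕ, IntegrableOn
      (fun x => x ^ i * F.eval x / Real.sqrt (1 - (F.eval x) ^ 2)) (Ioo x₀ x₁) :=
    fun i => key (fun x => x ^ i * F.eval x) ((continuous_pow i).mul (Polynomial.continuous F))
  have hsq_int : IntegrableOn
      (fun x => (F.eval x) ^ 2 / Real.sqrt (1 - (F.eval x) ^ 2)) (Ioo x₀ x₁) :=
    key (fun x => (F.eval x) ^ 2) ((Polynomial.continuous F).pow 2)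
  have hzero : ∫ x in Ioo x₀ x₁, (F.eval x) ^ 2 / Real.sqrt (1 - (F.eval x) ^ 2) = 0 := by
    have hrw : ∀ x : ℝ, (F.eval x) ^ 2 / Real.sqrt (1 - (F.eval x) ^ 2)
        = ∑ i ∈ Finset.range (k + 1),
            F.coeff i * (x ^ i * F.eval x / Real.sqrt (1 - (F.eval x) ^ 2)) := by
      intro x
      have he : F.eval x = ∑ i ∈ Finset.range (k + 1), F.coeff i * x ^ i :=
        Polynomial.eval_eq_sum_range' (lt_of_le_of_lt hdeg (Nat.lt_succ_self k)) x
      calc (F.eval x) ^ 2 / Real.sqrt (1 - (F.eval x) ^ 2)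
          = (∑ i ∈ Finset.range (k + 1), F.coeff i * x ^ i) * F.eval x
              / Real.sqrt (1 - (F.eval x) ^ 2) := by rw [← he, sq]
        _ = ∑ i ∈ Finset.range (k + 1),
              F.coeff i * (x ^ i * F.eval x / Real.sqrt (1 - (F.eval x) ^ 2)) := by
            rw [Finset.sum_mul, Finset.sum_div]
            exact Finset.sum_congr rfl fun i _ => by ring
    calc ∫ x in Ioo x₀ x₁, (F.eval x) ^ 2 / Real.sqrt (1 - (F.eval x) ^ 2)
        = ∫ x in Ioo x₀ x₁, ∑ i ∈ Finset.range (k + 1),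
            F.coeff i * (x ^ i * F.eval x / Real.sqrt (1 - (F.eval x) ^ 2)) := by
          simp_rw [hrw]
      _ = ∑ i ∈ Finset.range (k + 1), ∫ x in Ioo x₀ x₁,
            F.coeff i * (x ^ i * F.eval x / Real.sqrt (1 - (F.eval x) ^ 2)) :=
          integral_finset_sum _ (fun i _ => ((hint i).const_mul _))
      _ = ∑ i ∈ Finset.range (k + 1), F.coeff i * ∫ x in Ioo x₀ x₁,
            x ^ i * F.eval x / Real.sqrt (1 - (F.eval x) ^ 2) := by
          exact Finset.sum_congr rfl fun i _ => MeasureTheory.integral_const_mul _ _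
      _ = 0 := Finset.sum_eq_zero fun i hi => by
          rw [hIi i (Nat.lt_succ_iff.1 (Finset.mem_range.1 hi)), mul_zero]
  have hnn : 0 ≤ fun x => (F.eval x) ^ 2 / Real.sqrt (1 - (F.eval x) ^ 2) :=
    fun x => div_nonneg (sq_nonneg _) (Real.sqrt_nonneg _)
  have hae := (integral_eq_zero_iff_of_nonneg hnn hsq_int).1 hzero
  have hmem := ae_restrict_mem (μ := volume) measurableSet_Ioo (s := Ioo x₀ x₁)
  have hroot : ∀ᵐ x ∂(volume.restrict (Ioo x₀ x₁)), F.eval x = 0 := by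
    filter_upwards [hae, hmem] with x hx hxs
    have hs : 0 < Real.sqrt (1 - (F.eval x) ^ 2) :=
      Real.sqrt_pos.2 (by linarith [hHill x hxs])
    have hx' : (F.eval x) ^ 2 / Real.sqrt (1 - (F.eval x) ^ 2) = 0 := hx
    rcases div_eq_zero_iff.1 hx' with h | h
    · exact pow_eq_zero_iff two_ne_zero |>.1 h
    · exact absurd h hs.ne'
  have hZ : {x : ℝ | F.eval x = 0}.Finite := by
    have := F.finite_setOf_isRoot hF
    simpa [Polynomial.IsRoot] using this
  have hmeas : MeasurableSet {x : ℝ | F.eval x = 0} :=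
    measurableSet_eq_fun (Polynomial.continuous F).measurable measurable_const
  have hmeas' : MeasurableSet {x : ℝ | ¬ F.eval x = 0} := by
    have := hmeas.compl
    rwa [Set.compl_setOf] at this
  have h1' : volume ({x : ℝ | ¬ F.eval x = 0} ∩ Ioo x₀ x₁) = 0 := by
    have hr := hroot
    rw [MeasureTheory.ae_iff] at hr
    rwa [Measure.restrict_apply hmeas'] at hr
  have h2' : volume {x : ℝ | F.eval x = 0} = 0 := hZ.measure_zero _
  have hvol : volume (Ioo x₀ x₁) = 0 := by
    have hsub : Ioo x₀ x₁ ⊆ {x : ℝ | F.eval x = 0} ∪ ({x : ℝ | ¬ F.eval x = 0} ∩ Ioo x₀ x₁) := by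
      intro x hx
      by_cases h : F.eval x = 0
      · exact Or.inl h
      · exact Or.inr ⟨h, hx⟩
    refine le_antisymm ?_ (zero_le)
    calc volume (Ioo x₀ x₁) ≤ volume ({x : ℝ | F.eval x = 0} ∪ ({x : ℝ | ¬ F.eval x = 0} ∩ Ioo x₀ x₁)) :=
          measure_mono hsub
      _ ≤ volume {x : ℝ | F.eval x = 0} + volume ({x : ℝ | ¬ F.eval x = 0} ∩ Ioo x₀ x₁) :=
          measure_union_le _ _
      _ = 0 := by rw [h1', h2', add_zero]
  rw [Real.volume_Ioo] at hvol
  have : x₁ - x₀ ≤ 0 := ENNReal.ofReal_eq_zero.1 hvol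
  linarith
end

section
/- Let F be a polynomial with Hill interval [x₀, x₁] and regular endpoints, and set w(x) = (1 - F(x)²)^{-1/2}. Near the endpoint x₀, w(x) is bounded above by C(x - x₀)^{-1/2} for some constant C > 0 and x close to x₀ in (x₀, x₁); hence w is integrable near x₀. -/
/-!
Near `x₀` the function `g = 1 - F²` vanishes with derivative `d = g'(x₀) ≠ 0`; since `g > 0` just
to the right of `x₀`, in fact `d > 0`. The difference quotient `g x / (x - x₀)` tends to `d`, so
eventually `g x ≥ (d / 2) (x - x₀)`, i.e. `g x ≥ (x - x₀) / C` with `C = 2 / d`. Hence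
`g^{-1/2} ≤ √C (x - x₀)^{-1/2}`, which is integrable because `-1/2 > -1`.
-/

open Polynomial Set MeasureTheory Filter Topology

section

variable {f : ℝ → ℝ} {a f' : ℝ}

lemma HasDerivWithinAt.tendsto_slope_nhdsGT (hf : HasDerivWithinAt f f' (Ioi a) a) :
    Tendsto (slope f a) (𝓝[>] a) (𝓝 f') :=
  (hasDerivWithinAt_iff_tendsto_slope' (lt_irrefl a)).mp hf

lemma HasDerivWithinAt.nonneg_of_eventually_le (hf : HasDerivWithinAt f f' (Ioi a) a)
    (hle : ∀ᶠ x in 𝓝[>] a, f a ≤ f x) : 0 ≤ f' := by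
  refine ge_of_tendsto hf.tendsto_slope_nhdsGT ?_
  filter_upwards [hle, self_mem_nhdsWithin] with x hx (hax : a < x)
  rw [slope_def_field]
  exact div_nonneg (sub_nonneg.mpr hx) (sub_nonneg.mpr hax.le)

lemma HasDerivWithinAt.exists_div_le_sub (hf : HasDerivWithinAt f f' (Ioi a) a) (hf' : 0 < f') :
    ∃ C > (0 : ℝ), ∃ δ > (0 : ℝ), ∀ x ∈ Ioo a (a + δ), (x - a) / C ≤ f x - f a := by
  have hslope : ∀ᶠ x in 𝓝[>] a, f' / 2 < slope f a x :=
    hf.tendsto_slope_nhdsGT.eventually (eventually_gt_nhds (half_lt_self hf'))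
  obtain ⟨u, hau, hsub⟩ := mem_nhdsGT_iff_exists_Ioo_subset.mp hslope
  refine ⟨2 / f', by positivity, u - a, sub_pos.mpr hau, fun x hx => ?_⟩
  rw [add_sub_cancel] at hx
  have hxa : 0 < x - a := sub_pos.mpr hx.1
  have h : f' / 2 < slope f a x := hsub hx
  rw [slope_def_field, lt_div_iff₀ hxa] at h
  rw [div_div_eq_mul_div]
  linarith [mul_div_right_comm (x - a) f' 2, mul_comm (f' / 2) (x - a)]

end

lemma one_div_sqrt_le_of_div_le {t C y : ℝ} (ht : 0 < t) (hC : 0 < C) (hy : t / C ≤ y) :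
    1 / Real.sqrt y ≤ Real.sqrt C * t ^ (-(1 / 2 : ℝ)) := by
  calc 1 / Real.sqrt y ≤ 1 / Real.sqrt (t / C) :=
        one_div_le_one_div_of_le (Real.sqrt_pos.mpr (by positivity)) (Real.sqrt_le_sqrt hy)
    _ = Real.sqrt C * t ^ (-(1 / 2 : ℝ)) := by
        rw [Real.sqrt_div ht.le, Real.rpow_neg ht.le, ← Real.sqrt_eq_rpow, one_div_div,
          div_eq_mul_inv]

lemma integrableOn_Ioo_sub_rpow {s : ℝ} (hs : -1 < s) (a b : ℝ) :
    IntegrableOn (fun x => (x - a) ^ s) (Ioo a b) := by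
  have h := (intervalIntegral.intervalIntegrable_rpow' hs (a := 0) (b := b - a)).comp_sub_right a
  rw [zero_add, sub_add_cancel, intervalIntegrable_iff] at h
  exact h.mono_set (Ioo_subset_Ioc_self.trans Ioc_subset_uIoc)

lemma integrableOn_one_div_sqrt_of_div_le {g : ℝ → ℝ} {a C δ : ℝ} (hg : Measurable g)
    (hC : 0 < C) (hle : ∀ x ∈ Ioo a (a + δ), (x - a) / C ≤ g x) :
    IntegrableOn (fun x => 1 / Real.sqrt (g x)) (Ioo a (a + δ)) := by
  refine Integrable.mono' ((integrableOn_Ioo_sub_rpow (s := -(1 / 2)) (by norm_num) a (a + δ)).const_mul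
    (Real.sqrt C)) (hg.sqrt.const_div 1).aestronglyMeasurable ?_
  rw [ae_restrict_iff' measurableSet_Ioo]
  filter_upwards with x hx
  rw [Real.norm_eq_abs, abs_of_nonneg (by positivity)]
  exact one_div_sqrt_le_of_div_le (sub_pos.mpr hx.1) hC (hle x hx)

theorem exists_inv_sqrt_le_of_hasDerivWithinAt_ne_zero {g : ℝ → ℝ} {a d : ℝ}
    (hg : Measurable g) (hpos : ∀ᶠ x in 𝓝[>] a, 0 < g x) (ha : g a = 0)
    (hd : HasDerivWithinAt g d (Ioi a) a) (hd0 : d ≠ 0) :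
    ∃ C > (0 : ℝ), ∃ δ > (0 : ℝ),
      (∀ x ∈ Ioo a (a + δ), (x - a) / C ≤ g x) ∧
      (∀ x ∈ Ioo a (a + δ), 1 / Real.sqrt (g x) ≤ Real.sqrt C * (x - a) ^ (-(1 / 2 : ℝ))) ∧
      IntegrableOn (fun x => 1 / Real.sqrt (g x)) (Ioo a (a + δ)) := by
  have hd_pos : 0 < d :=
    (hd.nonneg_of_eventually_le (hpos.mono fun x hx => ha ▸ hx.le)).lt_of_ne' hd0
  obtain ⟨C, hC, δ, hδ, hle⟩ := hd.exists_div_le_sub hd_pos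
  simp only [ha, sub_zero] at hle
  exact ⟨C, hC, δ, hδ, hle,
    fun x hx => one_div_sqrt_le_of_div_le (sub_pos.mpr hx.1) hC (hle x hx),
    integrableOn_one_div_sqrt_of_div_le hg hC hle⟩

theorem weight_bound_near_endpoint (F : Polynomial ℝ) (x₀ x₁ : ℝ) (hlt : x₀ < x₁)
    (hHill : ∀ x ∈ Ioo x₀ x₁, (F.eval x) ^ 2 < 1)
    (h0 : (F.eval x₀) ^ 2 = 1)
    (hs0 : (Polynomial.derivative (1 - F ^ 2)).eval x₀ ≠ 0) :
    ∃ C > (0 : ℝ), ∃ δ > (0 : ℝ),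
      (∀ x ∈ Ioo x₀ (x₀ + δ), (x - x₀) / C ≤ 1 - (F.eval x) ^ 2) ∧
      (∀ x ∈ Ioo x₀ (x₀ + δ),
        1 / Real.sqrt (1 - (F.eval x) ^ 2) ≤ Real.sqrt C * (x - x₀) ^ (-(1 / 2 : ℝ))) ∧
      IntegrableOn (fun x => 1 / Real.sqrt (1 - (F.eval x) ^ 2)) (Ioo x₀ (x₀ + δ)) := by
  have hderiv : HasDerivAt (fun x => 1 - (F.eval x) ^ 2)
      ((Polynomial.derivative (1 - F ^ 2)).eval x₀) x₀ := by
    have h := (1 - F ^ 2).hasDerivAt x₀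
    simp only [eval_sub, eval_one, eval_pow] at h
    exact h
  have hpos : ∀ᶠ x in 𝓝[>] x₀, 0 < 1 - (F.eval x) ^ 2 := by
    filter_upwards [Ioo_mem_nhdsGT hlt] with x hx
    exact sub_pos.mpr (hHill x hx)
  exact exists_inv_sqrt_le_of_hasDerivWithinAt_ne_zero
    (continuous_const.sub (F.continuous.pow 2)).measurable hpos (by rw [h0, sub_self])
    hderiv.hasDerivWithinAt hs0
end

section
/- Let F be a polynomial with |F| < 1 on an open interval containing the closed interval [a, b]. Then the initial value problem ẋ = √(1 - F(x)²), x(0) = a, viewed within [a, b], has a solution reaching b in finite time T = ∫_a^b dx/√(1 - F(x)²), and this T is the unique such time. -/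
/-!
With `v = √(1 - F²)`, which is positive near `[a, b]`, the map `G y = ∫ s in a..y, 1 / v s` is
strictly increasing there with `G' = 1 / v`, so its inverse solves `ẋ = v x` and runs from `a` to `b`
in time `G b = T`. Conversely, along any solution `G ∘ x` has derivative `1`, so a solution going
from `a` to `b` takes time exactly `G b`.
-/

open Polynomial Set intervalIntegral
open Function Filter Topology

theorem hasDerivAt_integral_inv {v : ℝ → ℝ} {U : Set ℝ} (hU : IsOpen U) (hUc : U.OrdConnected)
    (hv : ContinuousOn v U) (hv0 : ∀ y ∈ U, v y ≠ 0) {c y : ℝ} (hc : c ∈ U) (hy : y ∈ U) :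
    HasDerivAt (fun z => ∫ s in c..z, (v s)⁻¹) (v y)⁻¹ y := by
  have hinv : ContinuousOn (fun s => (v s)⁻¹) U := hv.inv₀ hv0
  exact integral_hasDerivAt_right ((hinv.mono (hUc.uIcc_subset hc hy)).intervalIntegrable)
    (hinv.stronglyMeasurableAtFilter hU y hy) (hinv.continuousAt (hU.mem_nhds hy))

theorem eq_integral_inv_of_hasDerivAt {v x : ℝ → ℝ} {U : Set ℝ} (hU : IsOpen U)
    (hUc : U.OrdConnected) (hv : ContinuousOn v U) (hv0 : ∀ y ∈ U, v y ≠ 0) {T : ℝ} (hT : 0 ≤ T)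
    (hx : ∀ t ∈ Icc 0 T, x t ∈ U ∧ HasDerivAt x (v (x t)) t) :
    T = ∫ s in x 0..x T, (v s)⁻¹ := by
  have hderiv : ∀ t ∈ uIcc 0 T,
      HasDerivAt ((fun z => ∫ s in x 0..z, (v s)⁻¹) ∘ x) 1 t := by
    intro t ht
    obtain ⟨hxt, hdx⟩ := hx t (uIcc_of_le hT ▸ ht)
    have h := (hasDerivAt_integral_inv hU hUc hv hv0 (hx 0 ⟨le_rfl, hT⟩).1 hxt).comp t hdx
    rwa [inv_mul_cancel₀ (hv0 _ hxt)] at h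
  simpa using integral_eq_sub_of_hasDerivAt hderiv intervalIntegrable_const

theorem mapsTo_invFunOn_Icc {G : ℝ → ℝ} {s : Set ℝ} (hG : InjOn G s) {a b : ℝ} (hab : a ≤ b)
    (hs : Icc a b ⊆ s) (hcont : ContinuousOn G (Icc a b)) :
    MapsTo (invFunOn G s) (Icc (G a) (G b)) (Icc a b) := by
  intro t ht
  obtain ⟨y, hy, rfl⟩ := intermediate_value_Icc hab hcont ht
  rwa [hG.leftInvOn_invFunOn (hs hy)]

theorem hasDerivAt_invFunOn_Icc {G g : ℝ → ℝ} {c d t : ℝ} (hcd : c ≤ d)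
    (hmono : StrictMonoOn G (Icc c d)) (hG : ∀ y ∈ Icc c d, HasDerivAt G (g y) y)
    (hg : ∀ y ∈ Icc c d, g y ≠ 0) (ht : t ∈ Ioo (G c) (G d)) :
    HasDerivAt (invFunOn G (Icc c d)) (g (invFunOn G (Icc c d) t))⁻¹ t := by
  set x := invFunOn G (Icc c d)
  have hcont : ContinuousOn G (Icc c d) := fun y hy => (hG y hy).continuousAt.continuousWithinAt
  have hsurj : SurjOn G (Icc c d) (Icc (G c) (G d)) := intermediate_value_Icc hcd hcont
  have hmaps : MapsTo x (Icc (G c) (G d)) (Icc c d) := hsurj.mapsTo_invFunOn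
  have hright : RightInvOn x G (Icc (G c) (G d)) := hsurj.rightInvOn_invFunOn
  have hleft : LeftInvOn x G (Icc c d) := hmono.injOn.leftInvOn_invFunOn
  have hxmono : StrictMonoOn x (Icc (G c) (G d)) := fun t₁ h₁ t₂ h₂ h₁₂ =>
    (hmono.lt_iff_lt (hmaps h₁) (hmaps h₂)).1 (by rwa [hright h₁, hright h₂])
  have hxt : x t ∈ Ioo c d := by
    simpa only [hleft (left_mem_Icc.2 hcd), hleft (right_mem_Icc.2 hcd)] using
      hxmono.mapsTo_Ioo ht
  have hIcc : Icc (G c) (G d) ∈ 𝓝 t := Icc_mem_nhds ht.1 ht.2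
  have himage : x '' Icc (G c) (G d) ∈ 𝓝 (x t) :=
    mem_of_superset (Icc_mem_nhds hxt.1 hxt.2) fun y hy =>
      ⟨G y, hmono.monotoneOn.mapsTo_Icc hy, hleft hy⟩
  exact (hG _ (Ioo_subset_Icc_self hxt)).of_local_left_inverse
    (hxmono.continuousAt_of_image_mem_nhds hIcc himage) (hg _ (Ioo_subset_Icc_self hxt))
    (eventually_of_mem hIcc hright)

theorem exists_solution_reaching_of_pos {v : ℝ → ℝ} {a b a' b' : ℝ}
    (hv : ContinuousOn v (Ioo a' b')) (hv0 : ∀ y ∈ Ioo a' b', 0 < v y) (hab : a ≤ b)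
    (ha' : a' < a) (hb' : b < b') :
    ∃ x : ℝ → ℝ, x 0 = a ∧ x (∫ s in a..b, (v s)⁻¹) = b ∧
      ∀ t ∈ Icc 0 (∫ s in a..b, (v s)⁻¹), x t ∈ Icc a b ∧ HasDerivAt x (v (x t)) t := by
  -- invert `G` on a larger interval so that the inverse is differentiable at `G a` and `G b` too
  obtain ⟨c, ha'c, hca⟩ := exists_between ha'
  obtain ⟨d, hbd, hdb'⟩ := exists_between hb'
  have hcd : c ≤ d := (hca.trans_le hab |>.trans hbd).le
  have hsub : Icc c d ⊆ Ioo a' b' := Icc_subset_Ioo ha'c hdb'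
  have hab_sub : Icc a b ⊆ Icc c d := Icc_subset_Icc hca.le hbd.le
  set G := fun z => ∫ s in a..z, (v s)⁻¹
  have hG : ∀ y ∈ Icc c d, HasDerivAt G (v y)⁻¹ y := fun y hy =>
    hasDerivAt_integral_inv isOpen_Ioo ordConnected_Ioo hv (fun y hy => (hv0 y hy).ne')
      (hsub (hab_sub (left_mem_Icc.2 hab))) (hsub hy)
  have hmono : StrictMonoOn G (Icc c d) := by
    refine strictMonoOn_of_deriv_pos (convex_Icc c d)
      (fun y hy => (hG y hy).continuousAt.continuousWithinAt) fun y hy => ?_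
    rw [interior_Icc] at hy
    rw [(hG y (Ioo_subset_Icc_self hy)).deriv]
    exact inv_pos.2 (hv0 y (hsub (Ioo_subset_Icc_self hy)))
  have hGa : G a = 0 := integral_same
  have hleft : LeftInvOn (invFunOn G (Icc c d)) G (Icc c d) := hmono.injOn.leftInvOn_invFunOn
  refine ⟨invFunOn G (Icc c d), hGa ▸ hleft (hab_sub (left_mem_Icc.2 hab)),
    hleft (hab_sub (right_mem_Icc.2 hab)), fun t ht => ⟨?_, ?_⟩⟩
  · exact mapsTo_invFunOn_Icc hmono.injOn hab hab_sub
      (fun y hy => (hG y (hab_sub hy)).continuousAt.continuousWithinAt) (hGa ▸ ht)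
  · have hGca : G c < G a := hmono (left_mem_Icc.2 hcd) (hab_sub (left_mem_Icc.2 hab)) hca
    have hGbd : G b < G d := hmono (hab_sub (right_mem_Icc.2 hab)) (right_mem_Icc.2 hcd) hbd
    simpa only [inv_inv] using hasDerivAt_invFunOn_Icc hcd hmono hG
      (fun y hy => inv_ne_zero (hv0 y (hsub hy)).ne')
      ⟨hGca.trans_le (hGa ▸ ht.1), ht.2.trans_lt hGbd⟩

theorem ode_reaches_endpoint (F : Polynomial ℝ) (a b a' b' : ℝ) (hab : a < b)
    (ha' : a' < a) (hb' : b < b')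
    (hF : ∀ x ∈ Ioo a' b', (F.eval x) ^ 2 < 1) :
    (∃ x : ℝ → ℝ, x 0 = a ∧
        x (∫ s in a..b, 1 / Real.sqrt (1 - (F.eval s) ^ 2)) = b ∧
        ∀ t ∈ Icc (0 : ℝ) (∫ s in a..b, 1 / Real.sqrt (1 - (F.eval s) ^ 2)),
          x t ∈ Icc a b ∧ HasDerivAt x (Real.sqrt (1 - (F.eval (x t)) ^ 2)) t) ∧
    ∀ T : ℝ, 0 ≤ T →
      (∃ x : ℝ → ℝ, x 0 = a ∧ x T = b ∧
        ∀ t ∈ Icc (0 : ℝ) T,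
          x t ∈ Icc a b ∧ HasDerivAt x (Real.sqrt (1 - (F.eval (x t)) ^ 2)) t) →
      T = ∫ s in a..b, 1 / Real.sqrt (1 - (F.eval s) ^ 2) := by
  set v : ℝ → ℝ := fun y => Real.sqrt (1 - F.eval y ^ 2)
  have hv : ContinuousOn v (Ioo a' b') := by fun_prop
  have hv0 : ∀ y ∈ Ioo a' b', 0 < v y := fun y hy => Real.sqrt_pos.2 (sub_pos.2 (hF y hy))
  simp only [one_div]
  refine ⟨exists_solution_reaching_of_pos hv hv0 hab.le ha' hb', ?_⟩
  rintro T hT ⟨x, hx0, hxT, hx⟩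
  rw [← hx0, ← hxT]
  exact eq_integral_inv_of_hasDerivAt isOpen_Ioo ordConnected_Ioo hv (fun y hy => (hv0 y hy).ne')
    hT fun t ht => ⟨Icc_subset_Ioo ha' hb' (hx t ht).1, (hx t ht).2⟩
end
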